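/- Along any trace of the guest-message counter system, the list of nonces of the logged encryption events, taken in the order in which the events are logged, is strictly increasing. -/

import Mathlib

/-- The two honest agents exchanging guest messages: the SNP-protected guest
and the AMD-SP firmware. -/
inductive Agent : Type
  | Guest
  | FW
deriving DecidableEq

/-- The phase of the guest: idle, or waiting for a firmware response. -/
inductive Phase : Type
  | Idle
  | Waiting
deriving DecidableEq

/-- A state of the guest-message counter system: the guest's message counter,
the firmware's message counter, and the phase. The initial state is `⟨0, 0, Idle⟩`. -/
structure St : Type where
  gc : ℕ
  fc : ℕ
  ph : Phase

/-- An encryption event: the logging agent, the nonce (message counter) used,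
and the payload of type `M`. -/
abbrev EncEvent (M : Type) : Type := Agent × ℕ × M

/-- `Reach M s evs` holds iff, starting from the initial state `(0, 0, Idle)`,
the guest-message counter system can reach the state `s` having logged exactly
the list of encryption events `evs`, in order.  The transitions are:
`send` (the guest encrypts a request under nonce `gc`), `serve` (the firmware,
whose counter equals the guest's, encrypts a response under nonce `fc + 1` and
advances its counter by two), and `recv` (the guest, whose counter is two behind
the firmware's, receives the response and advances its counter by two). -/
inductive Reach (M : Type) : St → List (EncEvent M) → Prop
  | init : Reach M ⟨0, 0, Phase.Idle⟩ []
  | send {gc fc : ℕ} {evs : List (EncEvent M)} (m : M) :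
      Reach M ⟨gc, fc, Phase.Idle⟩ evs →
      Reach M ⟨gc, fc, Phase.Waiting⟩ (evs ++ [(Agent.Guest, gc, m)])
  | serve {gc fc : ℕ} {evs : List (EncEvent M)} (m : M) :
      Reach M ⟨gc, fc, Phase.Waiting⟩ evs → fc = gc →
      Reach M ⟨gc, fc + 2, Phase.Waiting⟩ (evs ++ [(Agent.FW, fc + 1, m)])
  | recv {gc fc : ℕ} {evs : List (EncEvent M)} :
      Reach M ⟨gc, fc, Phase.Waiting⟩ evs → fc = gc + 2 →
      Reach M ⟨gc + 2, fc, Phase.Idle⟩ evs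


private def bnd (s : St) : ℕ :=
  match s.ph with
  | Phase.Idle => s.gc
  | Phase.Waiting => max (s.gc + 1) s.fc

private lemma reach_aux {M : Type} {s : St} {evs : List (EncEvent M)}
    (h : Reach M s evs) :
    List.Pairwise (· < ·) (evs.map (fun e => e.2.1)) ∧
      ∀ n ∈ evs.map (fun e => e.2.1), n < bnd s := by
  induction h with
  | init => simp
  | send m _ ih =>
    obtain ⟨hs, hb⟩ := ih
    simp only [bnd] at hb ⊢
    constructor
    · simp only [List.map_append, List.map_cons, List.map_nil]
      refine List.pairwise_append.mpr ⟨hs, by simp, ?_⟩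
      intro x hx y hy
      simp at hy
      subst hy
      exact hb x hx
    · intro n hn
      simp only [List.map_append, List.mem_append, List.map_cons, List.map_nil,
        List.mem_cons] at hn
      rcases hn with hn | hn
      · have := hb n hn; omega
      · simp at hn
        subst hn
        exact lt_of_lt_of_le (by omega) (le_max_left _ _)
  | serve m _ hfc ih =>
    obtain ⟨hs, hb⟩ := ih
    subst hfc
    simp only [bnd] at hb ⊢
    constructor
    · simp only [List.map_append, List.map_cons, List.map_nil]
      refine List.pairwise_append.mpr ⟨hs, by simp, ?_⟩
      intro x hx y hy
      simp at hy
      subst hy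
      have := hb x hx
      omega
    · intro n hn
      simp only [List.map_append, List.mem_append, List.map_cons, List.map_nil,
        List.mem_cons] at hn
      rcases hn with hn | hn
      · have := hb n hn; omega
      · simp at hn; omega
  | recv _ hfc ih =>
    obtain ⟨hs, hb⟩ := ih
    subst hfc
    simp only [bnd] at hb ⊢
    exact ⟨hs, fun n hn => by have := hb n hn; omega⟩

/-- Along any trace of the guest-message counter system, the list of nonces of
the logged encryption events, taken in the order in which the events are logged,
is strictly increasing. -/
theorem nonces_strictly_increasing (M : Type) (s : St)
    (evs : List (EncEvent M)) (h : Reach M s evs) :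
    List.Pairwise (· < ·) (evs.map (fun e => e.2.1)) := by
  exact (reach_aux h).1
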